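/- arXiv:0710.3177 — 7 statements merged into one kernel-verified Lean document; each statement's English description precedes it below -/
import Mathlib

section
/- For any positive integer m and natural number k, S^{(m)}((2m)^k) = (1/(2m+1)) · Σ_{l=0}^{2m} Π_{j=0}^{k-1} (Σ_{d=0}^{2m-1} (−1)^d ω^{d·l·(2m)^j}), where ω = e^{2πi/(2m+1)}. -/
open Complex Real Finset

def S (m x : ℕ) : ℤ :=
  ∑ n ∈ Finset.range x, if (2 * m + 1) ∣ n then (-1 : ℤ) ^ ((Nat.digits (2 * m) n).sum) else 0

lemma digit_sum_step {b : ℕ} (hb : 2 ≤ b) (d n : ℕ) (hd : d < b) :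
    (Nat.digits b (d + b * n)).sum = d + (Nat.digits b n).sum := by
  rcases Nat.eq_zero_or_pos (d + b * n) with h | h
  · have hd0 : d = 0 := by omega
    have hn0 : n = 0 := by nlinarith
    simp [hd0, hn0]
  · rw [Nat.digits_def' hb h]
    have h1 : (d + b * n) % b = d := by
      rw [Nat.add_mul_mod_self_left, Nat.mod_eq_of_lt hd]
    have h2 : (d + b * n) / b = n := by
      rw [Nat.add_mul_div_left _ _ (by omega), Nat.div_eq_of_lt hd, Nat.zero_add]
    rw [h1, h2]; simp

lemma prod_eq_sum (b : ℕ) (hb : 2 ≤ b) (ω : ℂ) (k : ℕ) : ∀ l : ℕ,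
    (∏ j ∈ Finset.range k, ∑ d ∈ Finset.range b, (-1 : ℂ) ^ d * ω ^ (d * l * b ^ j))
      = ∑ n ∈ Finset.range (b ^ k), (-1 : ℂ) ^ ((Nat.digits b n).sum) * ω ^ (l * n) := by
  induction k with
  | zero => simp
  | succ k ih =>
    intro l
    rw [Finset.prod_range_succ']
    have hih := ih (l * b)
    have : (∏ j ∈ Finset.range k, ∑ d ∈ Finset.range b, (-1 : ℂ) ^ d * ω ^ (d * l * b ^ (j + 1)))
        = ∑ n ∈ Finset.range (b ^ k), (-1 : ℂ) ^ ((Nat.digits b n).sum) * ω ^ (l * b * n) := by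
      rw [← hih]
      apply Finset.prod_congr rfl
      intro j _
      apply Finset.sum_congr rfl
      intro d _
      ring_nf
    rw [this]
    simp only [pow_zero, mul_one]
    rw [Finset.sum_mul_sum]
    rw [show b ^ (k + 1) = b * b ^ k by ring]
    rw [← Finset.sum_product']
    apply Finset.sum_nbij' (i := fun p => p.2 + b * p.1)
      (j := fun n => (n / b, n % b))
    · rintro ⟨n, d⟩ h
      simp only [Finset.mem_product, Finset.mem_range] at h ⊢
      have h1 : n + 1 ≤ b ^ k := h.1
      have h2 : d + 1 ≤ b := h.2
      nlinarith
    · intro n h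
      simp only [Finset.mem_range] at h
      simp only [Finset.mem_product, Finset.mem_range]
      exact ⟨Nat.div_lt_of_lt_mul h, Nat.mod_lt _ (by omega)⟩
    · rintro ⟨n, d⟩ h
      simp only [Finset.mem_product, Finset.mem_range] at h
      simp only [Prod.mk.injEq]
      constructor
      · rw [Nat.add_mul_div_left _ _ (by omega : 0 < b), Nat.div_eq_of_lt h.2, Nat.zero_add]
      · rw [Nat.add_mul_mod_self_left, Nat.mod_eq_of_lt h.2]
    · intro n h
      simp only
      rw [Nat.mod_add_div]
    · rintro ⟨n, d⟩ h
      simp only [Finset.mem_product, Finset.mem_range] at h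
      simp only
      rw [digit_sum_step hb d n h.2, pow_add,
        show l * (d + b * n) = d * l + l * b * n by ring, pow_add]
      ring

lemma root_sum (N : ℕ) (hN : 2 ≤ N) (n : ℕ) :
    ∑ l ∈ Finset.range N, (Complex.exp (2 * Real.pi * Complex.I / N)) ^ (l * n)
      = if N ∣ n then (N : ℂ) else 0 := by
  have hprim := Complex.isPrimitiveRoot_exp N (by omega)
  set ω : ℂ := Complex.exp (2 * Real.pi * Complex.I / N) with hω
  have hrw : ∀ l : ℕ, ω ^ (l * n) = (ω ^ n) ^ l := fun l => by
    rw [← pow_mul, Nat.mul_comm]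
  simp only [hrw]
  by_cases h : N ∣ n
  · have h1 : ω ^ n = 1 := (hprim.pow_eq_one_iff_dvd n).mpr h
    simp [h1, if_pos h]
  · have hne : ω ^ n ≠ 1 := fun hc => h ((hprim.pow_eq_one_iff_dvd n).mp hc)
    rw [if_neg h, geom_sum_eq hne]
    have : (ω ^ n) ^ N = 1 := by
      rw [← pow_mul, Nat.mul_comm, pow_mul, hprim.pow_eq_one, one_pow]
    rw [this, sub_self, zero_div]

theorem S_eq_char_sum (m : ℕ) (hm : 0 < m) (k : ℕ) :
    let ω : ℂ := Complex.exp (2 * Real.pi * Complex.I / (2 * m + 1))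
    (S m ((2 * m) ^ k) : ℂ) =
      (1 / (2 * m + 1)) * ∑ l ∈ Finset.range (2 * m + 1),
        ∏ j ∈ Finset.range k,
          ∑ d ∈ Finset.range (2 * m), (-1 : ℂ) ^ d * ω ^ (d * l * (2 * m) ^ j) := by
  intro ω
  have hb : 2 ≤ 2 * m := by omega
  have hN : 2 ≤ 2 * m + 1 := by omega
  have hcast : ((2 * m + 1 : ℕ) : ℂ) = 2 * (m : ℂ) + 1 := by push_cast; ring
  have hω : ω = Complex.exp (2 * Real.pi * Complex.I / ((2 * m + 1 : ℕ) : ℂ)) := by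
    rw [hcast]
  have key : ∀ l, (∏ j ∈ Finset.range k,
        ∑ d ∈ Finset.range (2 * m), (-1 : ℂ) ^ d * ω ^ (d * l * (2 * m) ^ j))
      = ∑ n ∈ Finset.range ((2 * m) ^ k),
          (-1 : ℂ) ^ ((Nat.digits (2 * m) n).sum) * ω ^ (l * n) :=
    prod_eq_sum (2 * m) hb ω k
  rw [Finset.sum_congr rfl fun l _ => key l, Finset.sum_comm]
  have step : ∀ n ∈ Finset.range ((2 * m) ^ k),
      (∑ l ∈ Finset.range (2 * m + 1),
        (-1 : ℂ) ^ ((Nat.digits (2 * m) n).sum) * ω ^ (l * n))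
      = (-1 : ℂ) ^ ((Nat.digits (2 * m) n).sum)
          * (if (2 * m + 1) ∣ n then ((2 * m + 1 : ℕ) : ℂ) else 0) := by
    intro n _
    rw [← Finset.mul_sum, hω, root_sum (2 * m + 1) hN n]
  rw [Finset.sum_congr rfl step]
  have hNne : ((2 * m + 1 : ℕ) : ℂ) ≠ 0 := by
    simp only [Ne, Nat.cast_eq_zero]; omega
  have : (S m ((2 * m) ^ k) : ℂ) = ∑ n ∈ Finset.range ((2 * m) ^ k),
      (if (2 * m + 1) ∣ n then ((-1 : ℂ)) ^ ((Nat.digits (2 * m) n).sum) else 0) := by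
    simp only [S]
    push_cast
    rfl
  rw [this]
  rw [show (1 / (2 * (m:ℂ) + 1)) = 1 / ((2 * m + 1 : ℕ) : ℂ) by rw [hcast]]
  rw [Finset.mul_sum]
  apply Finset.sum_congr rfl
  intro n _
  by_cases h : (2 * m + 1) ∣ n
  · rw [if_pos h, if_pos h]
    rw [one_div, mul_comm ((-1 : ℂ) ^ ((Nat.digits (2 * m) n).sum)), ← mul_assoc,
      inv_mul_cancel₀ hNne, one_mul]
  · rw [if_neg h, if_neg h, mul_zero, mul_zero]
end

section
/- For any positive integer m and even positive integer k, S^{(m)}((2m)^k) = (2/(2m+1)) · Σ_{l=1}^{m} (tan(πl/(2m+1)))^k. -/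
/-! Filtering with the roots of unity `ζ ^ j`, `ζ = exp (2πi / p)`, `p = 2m + 1`, gives
`S = p⁻¹ ∑_{j < p} F (ζ ^ j)` with `F z = ∑_{n < (2m)^k} (-1)^{σ(n)} z ^ n`. Digit by digit,
`F z = ∏_{i < k} G (z ^ (2m)^i)` with `G w = ∑_{d < 2m} (-w)^d`. Since `2m ≡ -1 (mod p)`, the
points `z ^ (2m)^i` alternate between `z` and `z⁻¹`, so for even `k` we get
`F z = (G z * G z⁻¹)^(k/2)`, and for `z = exp (2ia)` the product `G z * G z⁻¹` equals
`(1 - z)/(1 + z) * (1 - z⁻¹)/(1 + z⁻¹) = tan² a`. Finally the terms `j` and `p - j` agree and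
the term `j = 0` vanishes. -/

open Real Finset

theorem Nat.digits_sum_add_base_mul {q : ℕ} (hq : 1 < q) {a : ℕ} (ha : a < q) (b : ℕ) :
    (Nat.digits q (a + q * b)).sum = a + (Nat.digits q b).sum := by
  by_cases h : a = 0 ∧ b = 0
  · simp [h.1, h.2]
  · rw [Nat.digits_add q hq a b ha (by tauto), List.sum_cons]

theorem Finset.sum_range_mul_eq_sum_sum {M : Type*} [AddCommMonoid M] (q r : ℕ) (f : ℕ → M) :
    ∑ n ∈ range (q * r), f n = ∑ b ∈ range r, ∑ a ∈ range q, f (a + q * b) := by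
  induction r with
  | zero => simp
  | succ r ih =>
    rw [Nat.mul_succ, sum_range_add, ih, sum_range_succ]
    simp only [add_comm (q * r)]

theorem sum_pow_digits_sum_mul_pow {R : Type*} [CommSemiring R] {q : ℕ} (hq : 1 < q)
    (c z : R) (k : ℕ) :
    ∑ n ∈ range (q ^ k), c ^ (Nat.digits q n).sum * z ^ n =
      ∏ i ∈ range k, ∑ d ∈ range q, (c * z ^ q ^ i) ^ d := by
  induction k generalizing z with
  | zero => simp
  | succ k ih =>
    simp only [prod_range_succ', pow_succ', pow_mul z q, ← ih (z ^ q), sum_range_mul_eq_sum_sum,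
      pow_zero, pow_one, sum_mul, mul_sum]
    rw [sum_comm]
    refine sum_congr rfl fun a ha => sum_congr rfl fun b _ => ?_
    rw [Nat.digits_sum_add_base_mul hq (mem_range.mp ha), pow_add, pow_add, pow_mul, mul_pow]
    ring

theorem IsPrimitiveRoot.sum_pow_pow_eq {R : Type*} [CommRing R] [IsDomain R] {ζ : R} {p : ℕ}
    (hζ : IsPrimitiveRoot ζ p) (n : ℕ) :
    ∑ j ∈ range p, (ζ ^ j) ^ n = if p ∣ n then (p : R) else 0 := by
  simp_rw [← pow_mul, mul_comm _ n, pow_mul]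
  split_ifs with h
  · simp [(hζ.pow_eq_one_iff_dvd n).2 h]
  · have h1 : ζ ^ n - 1 ≠ 0 := sub_ne_zero.2 fun e => h ((hζ.pow_eq_one_iff_dvd n).1 e)
    refine (mul_eq_zero.1 ?_).resolve_right h1
    rw [geom_sum_mul, ← pow_mul, mul_comm, pow_mul, hζ.pow_eq_one, one_pow, sub_self]

theorem IsPrimitiveRoot.sum_ite_dvd_eq {K : Type*} [Field K] {ζ : K} {p : ℕ}
    (hζ : IsPrimitiveRoot ζ p) (hp : (p : K) ≠ 0) (s : Finset ℕ) (f : ℕ → K) :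
    ∑ n ∈ s, (if p ∣ n then f n else 0) =
      (p : K)⁻¹ * ∑ j ∈ range p, ∑ n ∈ s, f n * (ζ ^ j) ^ n := by
  rw [sum_comm, mul_sum]
  refine sum_congr rfl fun n _ => ?_
  rw [← mul_sum, hζ.sum_pow_pow_eq]
  split_ifs
  · field_simp
  · simp

theorem prod_range_two_mul_pow_pow_of_pow_eq_inv {G M : Type*} [DivisionMonoid G] [CommMonoid M]
    (g : G → M) {z : G} {q : ℕ} (hz : z ^ q = z⁻¹) (t : ℕ) :
    ∏ i ∈ range (2 * t), g (z ^ q ^ i) = (g z * g z⁻¹) ^ t := by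
  have hz2 : ∀ i, z ^ q ^ (2 * i) = z := by
    intro i
    induction i with
    | zero => simp
    | succ i ih => rw [Nat.mul_succ, pow_add, pow_mul, ih, sq, pow_mul, hz, inv_pow, hz, inv_inv]
  induction t with
  | zero => simp
  | succ t ih =>
    rw [Nat.mul_succ, prod_range_succ, prod_range_succ, ih, pow_succ q (2 * t), pow_mul z, hz2, hz,
      pow_succ, mul_assoc]

theorem geom_sum_neg_eq {K : Type*} [Field K] {q : ℕ} (hq : Even q) {w : K} (hw : w ≠ -1) :
    ∑ d ∈ range q, (-w) ^ d = (1 - w ^ q) / (1 + w) := by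
  rw [geom_sum_eq (fun h => hw (neg_eq_iff_eq_neg.1 h)), hq.neg_pow, ← neg_div_neg_eq]
  congr 1 <;> ring

theorem geom_sum_neg_mul_geom_sum_neg_inv {K : Type*} [Field K] {q : ℕ} (hq : Even q) {z : K}
    (hz : z ^ (q + 1) = 1) (hz1 : z ≠ -1) :
    (∑ d ∈ range q, (-z) ^ d) * ∑ d ∈ range q, (-z⁻¹) ^ d =
      (1 - z) / (1 + z) * ((1 - z⁻¹) / (1 + z⁻¹)) := by
  have hzq : z ^ q = z⁻¹ := eq_inv_of_mul_eq_one_left (by rwa [← pow_succ])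
  have hzi1 : z⁻¹ ≠ -1 := fun h => hz1 (by rw [← inv_inv z, h, inv_neg, inv_one])
  rw [geom_sum_neg_eq hq hz1, geom_sum_neg_eq hq hzi1, hzq, inv_pow, hzq, inv_inv]
  ring

theorem Complex.one_sub_exp_div_one_add_exp (x : ℂ) :
    (1 - exp (2 * I * x)) / (1 + exp (2 * I * x)) = -I * tan x := by
  rw [← cot_inv_eq_tan, cot_eq_exp_ratio, inv_div, mul_div_assoc, ← mul_assoc, neg_mul, I_mul_I,
    neg_neg, one_mul, add_comm]

open Complex in
theorem sum_neg_one_pow_digits_sum_mul_exp_pow_eq_tan_pow {m : ℕ} (hm : 0 < m) {a : ℝ}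
    (ha : exp (2 * I * a) ^ (2 * m + 1) = 1) (t : ℕ) :
    ∑ n ∈ range ((2 * m) ^ (2 * t)), (-1 : ℂ) ^ (Nat.digits (2 * m) n).sum * exp (2 * I * a) ^ n =
      (Real.tan a : ℂ) ^ (2 * t) := by
  set z := exp (2 * I * a)
  have hz1 : z ≠ -1 := fun h => by
    rw [h, (odd_two_mul_add_one m).neg_pow, one_pow] at ha
    norm_num at ha
  have hzq : z ^ (2 * m) = z⁻¹ := eq_inv_of_mul_eq_one_left (by rwa [← pow_succ])
  have hzinv : z⁻¹ = exp (2 * I * ((-a : ℝ) : ℂ)) := by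
    rw [← Complex.exp_neg]
    push_cast
    ring_nf
  rw [sum_pow_digits_sum_mul_pow (by omega),
    prod_range_two_mul_pow_pow_of_pow_eq_inv (fun w => ∑ d ∈ range (2 * m), (-1 * w) ^ d) hzq]
  simp only [neg_one_mul]
  rw [geom_sum_neg_mul_geom_sum_neg_inv (even_two_mul m) ha hz1, hzinv,
    one_sub_exp_div_one_add_exp, one_sub_exp_div_one_add_exp, ofReal_tan, ofReal_neg,
    Complex.tan_neg, pow_mul]
  congr 1
  linear_combination (-Complex.tan a ^ 2) * I_sq

theorem Finset.sum_range_two_mul_add_one_of_symm {M : Type*} [AddCommMonoid M] (m : ℕ)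
    (f : ℕ → M) (hf : ∀ j ∈ Icc 1 m, f (2 * m + 1 - j) = f j) :
    ∑ j ∈ range (2 * m + 1), f j = f 0 + 2 • ∑ l ∈ Icc 1 m, f l := by
  have hreflect := sum_Ico_reflect f 1 (show m + 1 ≤ 2 * m + 1 + 1 by omega)
  rw [show 2 * m + 1 + 1 - (m + 1) = m + 1 by omega, show 2 * m + 1 + 1 - 1 = 2 * m + 1 by omega]
    at hreflect
  rw [range_eq_Ico, ← sum_Ico_consecutive f (Nat.zero_le _) (by omega : m + 1 ≤ 2 * m + 1),
    ← sum_Ico_consecutive f (Nat.zero_le 1) (by omega : 1 ≤ m + 1), ← hreflect,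
    Ico_add_one_right_eq_Icc, sum_congr rfl hf, Nat.Ico_zero_eq_range, sum_range_one, add_assoc,
    two_nsmul]

theorem S_pow_eq_sum_tan_pow {m : ℕ} (hm : 0 < m) {k : ℕ} (hk : Even k) :
    (S m ((2 * m) ^ k) : ℝ) =
      (2 * m + 1 : ℝ)⁻¹ *
        ∑ j ∈ range (2 * m + 1), Real.tan (π * j / (2 * m + 1)) ^ k := by
  obtain ⟨t, rfl⟩ := hk
  have hζ := Complex.isPrimitiveRoot_exp (2 * m + 1) (by omega)
  push_cast at hζ
  apply Complex.ofReal_injective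
  push_cast [S, apply_ite]
  rw [hζ.sum_ite_dvd_eq (by norm_cast), ← two_mul]
  push_cast
  congr 1
  refine sum_congr rfl fun j _ => ?_
  have hroot : Complex.exp (2 * π * Complex.I / (2 * m + 1)) ^ j =
      Complex.exp (2 * Complex.I * (π * j / (2 * m + 1) : ℝ)) := by
    rw [← Complex.exp_nat_mul]
    push_cast
    ring_nf
  rw [hroot, sum_neg_one_pow_digits_sum_mul_exp_pow_eq_tan_pow hm]
  · norm_cast
  · rw [← hroot, pow_right_comm, hζ.pow_eq_one, one_pow]

theorem sum_range_tan_pow_eq_two_mul_sum_Icc {m k : ℕ} (hk : 0 < k) (hke : Even k) :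
    ∑ j ∈ range (2 * m + 1), Real.tan (π * j / (2 * m + 1)) ^ k =
      2 * ∑ l ∈ Icc 1 m, Real.tan (π * l / (2 * m + 1)) ^ k := by
  rw [sum_range_two_mul_add_one_of_symm, nsmul_eq_mul]
  · simp [hk.ne']
  · intro j hj
    have hjm : j ≤ 2 * m + 1 := by have := (mem_Icc.1 hj).2; omega
    rw [Nat.cast_sub hjm]
    push_cast
    rw [show π * (2 * m + 1 - j) / (2 * m + 1) = π - π * j / (2 * m + 1) by field_simp,
      Real.tan_pi_sub, hke.neg_pow]

theorem S_even_k (m : ℕ) (hm : 0 < m) (k : ℕ) (hk : 0 < k) (hke : Even k) :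
    (S m ((2 * m) ^ k) : ℝ) =
      (2 / (2 * m + 1)) * ∑ l ∈ Finset.Icc 1 m, (Real.tan (Real.pi * l / (2 * m + 1))) ^ k := by
  rw [S_pow_eq_sum_tan_pow hm hke, sum_range_tan_pow_eq_two_mul_sum_Icc hk hke, div_eq_mul_inv]
  ring
end

section
/- For any positive integer m and odd positive integer k, S^{(m)}((2m)^k) = (2/(2m+1)) · Σ_{l=1}^{m} (tan(πl/(2m+1)))^k · sin(2πl/(2m+1)). -/
open Real Finset

/-! The signed digit polynomial `F_k(z) = ∑_{n < b^k} (-1)^{s_b(n)} z^n` satisfies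
`F_{k+1}(z) = g(z) F_k(z^b)` with `g(z) = ∑_{d < b} (-z)^d`. Filtering the multiples of `q = 2m+1`
with the `q`-th roots of unity `ω^j` gives `q S = ∑_{j < q} F_k(ω^j)`. For `b = 2m` we have `u^b = u⁻¹`
whenever `u^q = 1`, so the factors alternate between `g(u) = τ u⁻¹` and `g(u⁻¹) = -τ u`, where
`τ = (u - 1)/(u + 1) = i tan x` for `u = e^{2ix}`. For odd `k` this gives `F_k(u) = i tan^k x · u⁻¹`,
with real part `tan^k x · sin 2x`; the terms `j` and `q - j` agree, which halves the sum. -/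

theorem Nat.digits_sum_add_mul {b : ℕ} (hb : 1 < b) {d : ℕ} (hd : d < b) (a : ℕ) :
    (Nat.digits b (d + b * a)).sum = d + (Nat.digits b a).sum := by
  by_cases h : d = 0 ∧ a = 0
  · simp [h.1, h.2]
  · rw [Nat.digits_add b hb d a hd (by tauto), List.sum_cons]

theorem IsPrimitiveRoot.sum_pow_pow_eq_ite {R : Type*} [CommRing R] [IsDomain R] {ζ : R} {q : ℕ}
    (hζ : IsPrimitiveRoot ζ q) (n : ℕ) :
    ∑ j ∈ range q, (ζ ^ j) ^ n = if q ∣ n then (q : R) else 0 := by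
  simp_rw [← pow_mul, mul_comm _ n, pow_mul]
  split_ifs with h
  · simp [(hζ.pow_eq_one_iff_dvd n).2 h]
  · have hne : ζ ^ n - 1 ≠ 0 := sub_ne_zero.2 fun h' => h ((hζ.pow_eq_one_iff_dvd n).1 h')
    apply (mul_left_inj' hne).1
    rw [geom_sum_mul, ← pow_mul, mul_comm, pow_mul, hζ.pow_eq_one, one_pow, sub_self, zero_mul]

theorem IsPrimitiveRoot.mul_sum_ite_dvd {R : Type*} [CommRing R] [IsDomain R] {ζ : R} {q : ℕ}
    (hζ : IsPrimitiveRoot ζ q) (s : Finset ℕ) (a : ℕ → R) :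
    (q : R) * ∑ n ∈ s, (if q ∣ n then a n else 0) = ∑ j ∈ range q, ∑ n ∈ s, a n * (ζ ^ j) ^ n := by
  rw [sum_comm, mul_sum]
  refine sum_congr rfl fun n _ => ?_
  rw [← mul_sum, hζ.sum_pow_pow_eq_ite]
  split_ifs <;> ring

theorem Finset.sum_range_two_mul_add_one_of_reflect {M : Type*} [AddCommMonoid M] (m : ℕ)
    (f : ℕ → M) (h0 : f 0 = 0) (hf : ∀ j ∈ Icc 1 m, f (2 * m + 1 - j) = f j) :
    ∑ j ∈ range (2 * m + 1), f j = 2 • ∑ l ∈ Icc 1 m, f l := by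
  rw [sum_range_succ', h0, add_zero, two_mul, sum_range_add, two_nsmul,
    ← Ico_add_one_right_eq_Icc, sum_Ico_eq_sum_range, add_tsub_cancel_right]
  congr 1
  · simp only [add_comm 1]
  · rw [← sum_range_reflect]
    refine sum_congr rfl fun j hj => ?_
    have hj := mem_range.1 hj
    rw [← hf (1 + j) (mem_Icc.2 ⟨by omega, by omega⟩)]
    congr 1
    omega

section DigitSignPoly

variable {R : Type*} [CommRing R]

def digitSignPoly (b k : ℕ) (z : R) : R :=
  ∑ n ∈ range (b ^ k), (-1) ^ (Nat.digits b n).sum * z ^ n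

theorem digitSignPoly_zero (b : ℕ) (z : R) : digitSignPoly b 0 z = 1 := by
  simp [digitSignPoly]

theorem digitSignPoly_succ {b : ℕ} (hb : 1 < b) (k : ℕ) (z : R) :
    digitSignPoly b (k + 1) z = (∑ d ∈ range b, (-z) ^ d) * digitSignPoly b k (z ^ b) := by
  rw [digitSignPoly, digitSignPoly, mul_comm, sum_mul_sum, pow_succ]
  simp only [sum_range]
  rw [← Fintype.sum_prod_type', ← finProdFinEquiv.sum_comp]
  refine Fintype.sum_congr _ _ fun p => ?_
  rw [finProdFinEquiv_apply_val, Nat.digits_sum_add_mul hb p.2.isLt, pow_add, pow_add, pow_mul,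
    neg_pow]
  ring

end DigitSignPoly

section Field

variable {K : Type*} [Field K] {m : ℕ} {u : K}

theorem geom_sum_neg_of_pow_eq_one (hu : u ^ (2 * m + 1) = 1) (hu1 : u + 1 ≠ 0) :
    ∑ d ∈ range (2 * m), (-u) ^ d = (u - 1) / (u + 1) * u⁻¹ := by
  have hu0 : u ≠ 0 := by rintro rfl; simp at hu
  have hpow : u ^ (2 * m) = u⁻¹ := eq_inv_of_mul_eq_one_left (by rw [← pow_succ, hu])
  have hneg : -u - 1 ≠ 0 := by
    rw [← neg_add', neg_ne_zero]; exact hu1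
  rw [← mul_div_cancel_right₀ (∑ d ∈ range (2 * m), (-u) ^ d) hneg, geom_sum_mul,
    Even.neg_pow (even_two_mul m), hpow]
  field_simp
  ring

theorem digitSignPoly_two_mul_odd (hm : 0 < m) (hu : u ^ (2 * m + 1) = 1) (hu1 : u + 1 ≠ 0)
    (t : ℕ) :
    digitSignPoly (2 * m) (2 * t + 1) u = (-1) ^ t * ((u - 1) / (u + 1)) ^ (2 * t + 1) * u⁻¹ := by
  have hb : 1 < 2 * m := by omega
  have hu0 : u ≠ 0 := by rintro rfl; simp at hu
  have hpow : u ^ (2 * m) = u⁻¹ := eq_inv_of_mul_eq_one_left (by rw [← pow_succ, hu])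
  have hu1' : u⁻¹ + 1 ≠ 0 := by
    rw [show u⁻¹ + 1 = u⁻¹ * (u + 1) by field_simp; ring]
    exact mul_ne_zero (inv_ne_zero hu0) hu1
  have hg_inv : ∑ d ∈ range (2 * m), (-u⁻¹) ^ d = -((u - 1) / (u + 1)) * u := by
    rw [geom_sum_neg_of_pow_eq_one (by rw [inv_pow, hu, inv_one]) hu1', inv_inv,
      show u⁻¹ + 1 = (u + 1) * u⁻¹ by field_simp; ring,
      show u⁻¹ - 1 = -(u - 1) * u⁻¹ by field_simp; ring, mul_div_mul_right _ _ (inv_ne_zero hu0)]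
    ring
  induction t with
  | zero => simp [digitSignPoly_succ hb, digitSignPoly_zero, geom_sum_neg_of_pow_eq_one hu hu1]
  | succ t ih =>
    rw [show 2 * (t + 1) + 1 = 2 * t + 1 + 1 + 1 by ring, digitSignPoly_succ hb,
      digitSignPoly_succ hb, hpow, inv_pow, hpow, inv_inv, ih,
      geom_sum_neg_of_pow_eq_one hu hu1, hg_inv]
    generalize (u - 1) / (u + 1) = τ
    field_simp
    ring

end Field

theorem Complex.exp_two_mul_mul_I_sub_one_div (x : ℂ) :
    (Complex.exp (2 * x * Complex.I) - 1) / (Complex.exp (2 * x * Complex.I) + 1) =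
      Complex.tan x * Complex.I := by
  have hw : Complex.exp (x * Complex.I) ≠ 0 := Complex.exp_ne_zero _
  rw [Complex.tan, Complex.sin, Complex.cos, neg_mul, Complex.exp_neg,
    show 2 * x * Complex.I = x * Complex.I + x * Complex.I by ring, Complex.exp_add]
  generalize Complex.exp (x * Complex.I) = w at hw ⊢
  field_simp
  ring_nf
  rw [Complex.I_sq]
  ring

theorem re_digitSignPoly_two_mul_odd_exp {m : ℕ} (hm : 0 < m) (t : ℕ) (x : ℝ)
    (hu : Complex.exp (2 * x * Complex.I) ^ (2 * m + 1) = 1) :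
    (digitSignPoly (2 * m) (2 * t + 1) (Complex.exp (2 * x * Complex.I))).re =
      Real.tan x ^ (2 * t + 1) * Real.sin (2 * x) := by
  have hu1 : Complex.exp (2 * x * Complex.I) + 1 ≠ 0 := by
    intro h
    rw [add_eq_zero_iff_eq_neg.1 h, Odd.neg_one_pow ⟨m, rfl⟩] at hu
    norm_num at hu
  have hsign : (-1) ^ t * ((Real.tan x : ℂ) * Complex.I) ^ (2 * t + 1) =
      Complex.I * (Real.tan x ^ (2 * t + 1) : ℝ) := by
    rw [mul_pow, pow_succ Complex.I, pow_mul, Complex.I_sq]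
    push_cast
    ring_nf
    rw [Even.neg_one_pow ⟨t, by ring⟩, mul_one]
  rw [digitSignPoly_two_mul_odd hm hu hu1, Complex.exp_two_mul_mul_I_sub_one_div,
    ← Complex.ofReal_tan, hsign, ← Complex.exp_neg, ← neg_mul,
    show -(2 * (x : ℂ)) = ((-(2 * x) : ℝ) : ℂ) by push_cast; ring]
  rw [mul_assoc, Complex.I_mul_re, Complex.im_ofReal_mul, Complex.exp_ofReal_mul_I_im, Real.sin_neg]
  ring

theorem tan_pow_mul_sin_reflect_of_odd {k : ℕ} (hk : Odd k) {q : ℝ} (hq : q ≠ 0) (x : ℝ) :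
    Real.tan (π * (q - x) / q) ^ k * Real.sin (2 * π * (q - x) / q) =
      Real.tan (π * x / q) ^ k * Real.sin (2 * π * x / q) := by
  rw [show π * (q - x) / q = π - π * x / q by field_simp,
    show 2 * π * (q - x) / q = 2 * π - 2 * π * x / q by field_simp,
    Real.tan_pi_sub, Real.sin_two_pi_sub, hk.neg_pow, neg_mul_neg]

theorem cast_mul_S_eq_sum_digitSignPoly (m k : ℕ) :
    ((2 * m + 1 : ℕ) : ℂ) * S m ((2 * m) ^ k) = ∑ j ∈ range (2 * m + 1),
      digitSignPoly (2 * m) k (Complex.exp (2 * π * Complex.I / (2 * m + 1 : ℕ)) ^ j) := by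
  simp only [S, Int.cast_sum, Int.cast_ite, Int.cast_pow, Int.cast_neg, Int.cast_one, Int.cast_zero]
  exact (Complex.isPrimitiveRoot_exp (2 * m + 1) (by omega)).mul_sum_ite_dvd _ _

theorem mul_S_eq_sum_tan_pow_mul_sin {m : ℕ} (hm : 0 < m) (t : ℕ) :
    (2 * m + 1 : ℝ) * S m ((2 * m) ^ (2 * t + 1)) = ∑ j ∈ range (2 * m + 1),
      Real.tan (π * j / (2 * m + 1)) ^ (2 * t + 1) * Real.sin (2 * π * j / (2 * m + 1)) := by
  set ω := Complex.exp (2 * π * Complex.I / (2 * m + 1 : ℕ))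
  have hroot (j : ℕ) :
      ω ^ j = Complex.exp (2 * ((π * j / (2 * m + 1) : ℝ) : ℂ) * Complex.I) := by
    rw [← Complex.exp_nat_mul]
    push_cast
    field_simp
  have hsum := congrArg Complex.re (cast_mul_S_eq_sum_digitSignPoly m (2 * t + 1))
  rw [show ((2 * m + 1 : ℕ) : ℂ) * S m ((2 * m) ^ (2 * t + 1)) =
      ((2 * m + 1 : ℝ) * S m ((2 * m) ^ (2 * t + 1)) : ℝ) by push_cast; rfl,
    Complex.ofReal_re, Complex.re_sum] at hsum
  rw [hsum]
  refine sum_congr rfl fun j _ => ?_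
  have hω : ω ^ (2 * m + 1) = 1 := (Complex.isPrimitiveRoot_exp (2 * m + 1) (by omega)).pow_eq_one
  rw [hroot, re_digitSignPoly_two_mul_odd_exp hm t _
    (by rw [← hroot, ← pow_mul, mul_comm, pow_mul, hω, one_pow])]
  congr 2
  ring

theorem S_odd_k_general (m : ℕ) (hm : 0 < m) (k : ℕ) (hko : Odd k) :
    (S m ((2 * m) ^ k) : ℝ) =
      (2 / (2 * m + 1)) * ∑ l ∈ Finset.Icc 1 m,
        (Real.tan (Real.pi * l / (2 * m + 1))) ^ k * Real.sin (2 * Real.pi * l / (2 * m + 1)) := by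
  obtain ⟨t, rfl⟩ := hko
  have hsum := mul_S_eq_sum_tan_pow_mul_sin hm t
  rw [sum_range_two_mul_add_one_of_reflect m _ (by simp) fun j hj => ?_, nsmul_eq_mul,
    Nat.cast_ofNat] at hsum
  · rw [div_mul_eq_mul_div, eq_div_iff (by positivity), mul_comm, hsum]
  · have hj : j ≤ 2 * m + 1 := by simp only [mem_Icc] at hj; omega
    push_cast [Nat.cast_sub hj]
    exact tan_pow_mul_sin_reflect_of_odd ⟨t, rfl⟩ (by positivity) j

theorem S_odd_k (m : ℕ) (hm : 0 < m) (k : ℕ) (hk : 0 < k) (hko : Odd k) :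
    (S m ((2 * m) ^ k) : ℝ) =
      (2 / (2 * m + 1)) * ∑ l ∈ Finset.Icc 1 m,
        (Real.tan (Real.pi * l / (2 * m + 1))) ^ k * Real.sin (2 * Real.pi * l / (2 * m + 1)) :=
  S_odd_k_general m hm k hko
end

section
/- For every positive integer m, 4m/π < cot(π/(4m+2)) < √2·(m+1). -/
/-!
Put `x = π / (4m + 2)`, so that `1 / x = (4m + 2) / π` and `4m / π = 1 / x - 2 / π`.
From `x < tan x` we get `cot x < 1 / x`, and `1 / x < √2 (m + 1)` because `π √2 > 4`.
From `sin x < x` and `cos x > 1 - x² / 2` we get `cot x > 1 / x - x / 2`, and `x / 2 ≤ 2 / π`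
since `x ≤ π / 6` once `m ≥ 1`.
-/

open Real

namespace Real

lemma cot_lt_one_div {x : ℝ} (hx₀ : 0 < x) (hx : x < π / 2) : cot x < 1 / x := by
  rw [cot_eq_cos_div_sin, ← one_div_div, ← tan_eq_sin_div_cos]
  exact one_div_lt_one_div_of_lt hx₀ (lt_tan hx₀ hx)

lemma one_div_sub_half_lt_cot {x : ℝ} (hx₀ : 0 < x) (hx : x ^ 2 ≤ 2) :
    1 / x - x / 2 < cot x := by
  have hxπ : x < π := by nlinarith [pi_gt_three]
  have hsin : 0 < sin x := sin_pos_of_pos_of_lt_pi hx₀ hxπ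
  calc 1 / x - x / 2 = (1 - x ^ 2 / 2) / x := by field_simp
    _ ≤ (1 - x ^ 2 / 2) / sin x :=
        div_le_div_of_nonneg_left (by linarith) hsin (sin_lt hx₀).le
    _ < cos x / sin x := div_lt_div_of_pos_right (one_sub_sq_div_two_lt_cos hx₀.ne') hsin
    _ = cot x := (cot_eq_cos_div_sin x).symm

lemma four_lt_pi_mul_sqrt_two : 4 < π * √2 := by
  have hsqrt : 4 / 3 < √2 := lt_sqrt_of_sq_lt (by norm_num)
  nlinarith [pi_gt_three]

end Real

theorem cot_bounds (m : ℕ) (hm : 0 < m) :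
    4 * m / Real.pi < Real.cot (Real.pi / (4 * m + 2)) ∧
      Real.cot (Real.pi / (4 * m + 2)) < Real.sqrt 2 * (m + 1) := by
  have hm₁ : (1 : ℝ) ≤ m := by exact_mod_cast hm
  have hπ := pi_pos
  set x := π / (4 * m + 2)
  have hx₀ : 0 < x := by positivity
  have hx_le : x ≤ π / 6 := div_le_div_of_nonneg_left hπ.le (by norm_num) (by linarith)
  have hinv : 1 / x = (4 * m + 2) / π := one_div_div _ _
  constructor
  · have hhalf : x / 2 ≤ 2 / π := by
      rw [div_le_div_iff₀ two_pos hπ]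
      nlinarith [pi_lt_four]
    calc 4 * m / π = 1 / x - 2 / π := by rw [hinv]; ring
      _ ≤ 1 / x - x / 2 := by linarith
      _ < cot x := one_div_sub_half_lt_cot hx₀ (by nlinarith [pi_lt_four])
  · calc cot x < 1 / x := cot_lt_one_div hx₀ (by linarith)
      _ < √2 * (m + 1) := by
        rw [hinv, div_lt_iff₀ hπ]
        nlinarith [four_lt_pi_mul_sqrt_two]
end

section
/- For every positive integer m, Σ_{l=1}^{m} tan^4(πl/(2m+1)) = (m/3)·(2m+1)·(4m² + 6m − 1). -/
/-!
For `θ = π l / (2m + 1)` with `1 ≤ l ≤ m`, de Moivre gives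
`cos θ ^ (2m+1) * Im (1 + i tan θ) ^ (2m+1) = sin ((2m+1) θ) = 0`, and expanding the power shows
that the `m` distinct numbers `tan² θ` are the roots of the degree-`m` polynomial
`∑ₖ (-1)ᵏ C(2m+1, 2k+1) xᵏ`. By Vieta their elementary symmetric functions are
`eⱼ = C(2m+1, 2j)`, and the sum of their squares is `e₁² - 2 e₂`.
-/

open Real Finset

theorem Finset.sum_range_two_mul {M : Type*} [AddCommMonoid M] (f : ℕ → M) (n : ℕ) :
    ∑ j ∈ range (2 * n), f j = ∑ k ∈ range n, (f (2 * k) + f (2 * k + 1)) := by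
  induction n with
  | zero => simp
  | succ n ih => rw [Nat.mul_succ, sum_range_succ, sum_range_succ, sum_range_succ, ih, add_assoc]

theorem Nat.cast_choose_four (K : Type*) [Field K] [CharZero K] (a : ℕ) :
    (a.choose 4 : K) = a * (a - 1) * (a - 2) * (a - 3) / 24 := by
  rw [cast_choose_eq_descPochhammer_div]
  simp [descPochhammer_succ_right, Nat.factorial]

namespace Multiset

theorem esymm_cons_succ {R : Type*} [CommSemiring R] (a : R) (s : Multiset R) (n : ℕ) :
    (a ::ₘ s).esymm (n + 1) = s.esymm (n + 1) + a * s.esymm n := by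
  simp [esymm, powersetCard_cons, map_map, sum_map_mul_left]

theorem sum_map_sq_eq_esymm {R : Type*} [CommRing R] (s : Multiset R) :
    (s.map (· ^ 2)).sum = s.esymm 1 ^ 2 - 2 * s.esymm 2 := by
  induction s using Multiset.induction_on with
  | empty => simp [esymm, powersetCard_zero_right]
  | cons a s ih =>
    have h0 : s.esymm 0 = 1 := by simp [esymm]
    rw [map_cons, sum_cons, ih, esymm_cons_succ, esymm_cons_succ, h0]
    ring

end Multiset

theorem cos_pow_mul_im_one_add_tan_mul_I_pow {θ : ℝ} (hθ : cos θ ≠ 0) (n : ℕ) :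
    cos θ ^ n * ((1 + tan θ * Complex.I) ^ n).im = sin (n * θ) := by
  have hc : Complex.cos θ ≠ 0 := by exact_mod_cast hθ
  have h : (cos θ : ℂ) * (1 + tan θ * Complex.I) = Complex.cos θ + Complex.sin θ * Complex.I := by
    rw [tan_eq_sin_div_cos]; push_cast; field_simp
  rw [← Complex.im_ofReal_mul, Complex.ofReal_pow, ← mul_pow, h, Complex.cos_add_sin_mul_I_pow,
    ← Complex.ofReal_natCast, ← Complex.ofReal_mul, Complex.add_im, Complex.cos_ofReal_im,
    Complex.mul_I_im, Complex.sin_ofReal_re, zero_add]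

open Polynomial

noncomputable def tanPoly (m : ℕ) : ℝ[X] :=
  ∑ k ∈ range (m + 1), C ((-1) ^ k * ((2 * m + 1).choose (2 * k + 1) : ℝ)) * X ^ k

theorem coeff_tanPoly (m k : ℕ) :
    (tanPoly m).coeff k = (-1) ^ k * ((2 * m + 1).choose (2 * k + 1) : ℝ) := by
  simp only [tanPoly, finsetSum_coeff, coeff_C_mul, coeff_X_pow, mul_ite, mul_one, mul_zero,
    sum_ite_eq, mem_range]
  split_ifs with hk
  · rfl
  · simp [Nat.choose_eq_zero_of_lt (by omega : 2 * m + 1 < 2 * k + 1)]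

theorem natDegree_tanPoly (m : ℕ) : (tanPoly m).natDegree = m := by
  refine natDegree_eq_of_le_of_coeff_ne_zero ?_ (by simp [coeff_tanPoly])
  exact natDegree_sum_le_of_forall_le _ _ fun k hk =>
    (natDegree_C_mul_X_pow_le _ _).trans (Nat.lt_succ_iff.mp (mem_range.mp hk))

theorem leadingCoeff_tanPoly (m : ℕ) : (tanPoly m).leadingCoeff = (-1) ^ m := by
  simp [leadingCoeff, natDegree_tanPoly, coeff_tanPoly]

theorem im_one_add_mul_I_pow_eq_eval_tanPoly (t : ℝ) (m : ℕ) :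
    ((1 + t * Complex.I) ^ (2 * m + 1)).im = t * (tanPoly m).eval (t ^ 2) := by
  have hsq : ∀ k : ℕ, ((t : ℂ) * Complex.I) ^ (2 * k) = (((-t ^ 2) ^ k : ℝ) : ℂ) := fun k => by
    rw [pow_mul, mul_pow, Complex.I_sq]; push_cast; ring
  rw [add_comm, add_pow, Complex.im_sum, show 2 * m + 1 + 1 = 2 * (m + 1) by ring,
    Finset.sum_range_two_mul, tanPoly, eval_finsetSum, mul_sum]
  refine sum_congr rfl fun k _ => ?_
  simp only [pow_succ _ (2 * k), hsq, one_pow, mul_one, eval_C_mul, eval_X_pow,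
    Complex.mul_im, Complex.mul_re, Complex.ofReal_re, Complex.ofReal_im, Complex.I_re,
    Complex.I_im, Complex.natCast_re, Complex.natCast_im]
  ring

theorem pi_mul_div_mem_Ioo {m l : ℕ} (hl : 1 ≤ l) (hlm : l ≤ m) :
    π * l / (2 * m + 1) ∈ Set.Ioo 0 (π / 2) := by
  have hl' : (1 : ℝ) ≤ l := by exact_mod_cast hl
  have hlm' : (l : ℝ) ≤ m := by exact_mod_cast hlm
  constructor
  · positivity
  · rw [div_lt_iff₀ (by positivity)]
    nlinarith [pi_pos]

theorem isRoot_tanPoly {m l : ℕ} (hl : 1 ≤ l) (hlm : l ≤ m) :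
    (tanPoly m).IsRoot (tan (π * l / (2 * m + 1)) ^ 2) := by
  obtain ⟨h0, h1⟩ := pi_mul_div_mem_Ioo hl hlm
  set θ := π * l / (2 * m + 1) with hθ
  have hcos : cos θ ≠ 0 := (cos_pos_of_mem_Ioo ⟨by linarith [pi_pos], h1⟩).ne'
  have htan : tan θ ≠ 0 := (tan_pos_of_pos_of_lt_pi_div_two h0 h1).ne'
  have hsin : sin ((2 * m + 1 : ℕ) * θ) = 0 := by
    rw [hθ, show ((2 * m + 1 : ℕ) : ℝ) * (π * l / (2 * m + 1)) = l * π by push_cast; field_simp]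
    exact sin_nat_mul_pi l
  have h := cos_pow_mul_im_one_add_tan_mul_I_pow hcos (2 * m + 1)
  rw [im_one_add_mul_I_pow_eq_eval_tanPoly, hsin] at h
  simpa [IsRoot, hcos, htan] using h

theorem strictMonoOn_tan_sq (m : ℕ) :
    StrictMonoOn (fun l : ℕ => tan (π * l / (2 * m + 1)) ^ 2) (Set.Icc 1 m) := by
  intro a ⟨ha1, ham⟩ b ⟨hb1, hbm⟩ hab
  obtain ⟨ha0, -⟩ := pi_mul_div_mem_Ioo ha1 ham
  obtain ⟨-, hb⟩ := pi_mul_div_mem_Ioo hb1 hbm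
  have hlt : π * a / (2 * m + 1) < π * b / (2 * m + 1) := by gcongr
  exact pow_lt_pow_left₀ (tan_lt_tan_of_nonneg_of_lt_pi_div_two ha0.le hb hlt)
    (tan_pos_of_pos_of_lt_pi_div_two ha0 (hlt.trans hb)).le two_ne_zero

theorem roots_tanPoly (m : ℕ) :
    (tanPoly m).roots = (Icc 1 m).val.map fun l : ℕ => tan (π * l / (2 * m + 1)) ^ 2 := by
  have hnodup : ((Icc 1 m).val.map fun l : ℕ => tan (π * l / (2 * m + 1)) ^ 2).Nodup :=
    (Icc 1 m).nodup.map_on fun a ha b hb => (strictMonoOn_tan_sq m).injOn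
      (by simpa using ha) (by simpa using hb)
  have hne : tanPoly m ≠ 0 := leadingCoeff_ne_zero.mp (by simp [leadingCoeff_tanPoly])
  symm
  apply Multiset.eq_of_le_of_card_le
  · rw [Multiset.le_iff_subset hnodup]
    intro x hx
    obtain ⟨l, hl, rfl⟩ := Multiset.mem_map.mp hx
    obtain ⟨hl1, hlm⟩ := mem_Icc.mp (mem_val.mp hl)
    exact (mem_roots hne).mpr (isRoot_tanPoly hl1 hlm)
  · simpa [natDegree_tanPoly] using card_roots' (tanPoly m)

theorem esymm_roots_tanPoly (m j : ℕ) :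
    (tanPoly m).roots.esymm j = (2 * m + 1).choose (2 * j) := by
  have hcard : Multiset.card (tanPoly m).roots = (tanPoly m).natDegree := by
    simp [roots_tanPoly, natDegree_tanPoly]
  rcases le_or_gt j m with hj | hj
  · obtain ⟨k, rfl⟩ := Nat.exists_eq_add_of_le' hj
    have h := coeff_eq_esymm_roots_of_card hcard (k := k) (by simp [natDegree_tanPoly])
    rw [coeff_tanPoly, leadingCoeff_tanPoly, natDegree_tanPoly, Nat.add_sub_cancel_left,
      Nat.choose_symm_of_eq_add (show 2 * (k + j) + 1 = 2 * k + 1 + 2 * j by ring)] at h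
    have hsign : (-1 : ℝ) ^ (k + j) * (-1) ^ j = (-1) ^ k := by
      rw [pow_add, mul_assoc, ← pow_add, ← two_mul, pow_mul]
      norm_num
    rw [hsign] at h
    exact (mul_left_cancel₀ (pow_ne_zero _ (neg_ne_zero.2 one_ne_zero)) h).symm
  · rw [Multiset.esymm, Multiset.powersetCard_eq_empty _ (by simp [hcard, natDegree_tanPoly, hj]),
      Nat.choose_eq_zero_of_lt (by omega)]
    simp

theorem tan_fourth_sum_general (m : ℕ) :
    ∑ l ∈ Finset.Icc 1 m, (Real.tan (Real.pi * l / (2 * m + 1))) ^ 4 =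
      (m / 3) * (2 * m + 1) * (4 * m ^ 2 + 6 * m - 1) := by
  have hsum : ∑ l ∈ Icc 1 m, tan (π * l / (2 * m + 1)) ^ 4 =
      ((tanPoly m).roots.map (· ^ 2)).sum := by
    rw [roots_tanPoly, Multiset.map_map, Finset.sum_eq_multiset_sum]
    simp only [Function.comp_def, ← pow_mul]
  rw [hsum, Multiset.sum_map_sq_eq_esymm, esymm_roots_tanPoly, esymm_roots_tanPoly,
    Nat.cast_choose_two, Nat.cast_choose_four]
  push_cast
  ring

theorem tan_fourth_sum (m : ℕ) (hm : 0 < m) :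
    ∑ l ∈ Finset.Icc 1 m, (Real.tan (Real.pi * l / (2 * m + 1))) ^ 4 =
      (m / 3) * (2 * m + 1) * (4 * m ^ 2 + 6 * m - 1) :=
  tan_fourth_sum_general m
end

section
/- For every positive integer m and every even positive integer k, S^{(m)}((2m)^k) is an even integer. -/
open Finset

theorem Finset.even_sum_ite_neg_one_pow_iff {ι : Type*} (s : Finset ι) (p : ι → Prop)
    [DecidablePred p] (f : ι → ℕ) :
    Even (∑ i ∈ s, if p i then (-1 : ℤ) ^ f i else 0) ↔ Even #{i ∈ s | p i} := by
  have hdiff : Even ((∑ i ∈ s, if p i then (-1 : ℤ) ^ f i else 0) - #{i ∈ s | p i}) := by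
    rw [natCast_card_filter, ← sum_sub_distrib]
    refine even_sum _ fun i _ ↦ ?_
    split_ifs
    · exact Int.even_sub.mpr (by simp [Int.even_pow])
    · simp
  rw [Int.even_sub.mp hdiff, Int.even_coe_nat]

theorem Nat.card_filter_dvd_range_mul_add_one {d : ℕ} (hd : 0 < d) (q : ℕ) :
    #{n ∈ range (d * q + 1) | d ∣ n} = q + 1 := by
  rw [range_eq_Ico, Ico_add_one_right_eq_Icc, ← Ioc_insert_left (Nat.zero_le _), filter_insert,
    if_pos (dvd_zero d), card_insert_of_notMem (by simp), Nat.Ioc_filter_dvd_card_eq_div,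
    Nat.mul_div_cancel_left q hd]

theorem Nat.even_card_filter_dvd_range {d N : ℕ} (hd : Odd d) (hN : Even N)
    (hmod : N ≡ 1 [MOD d]) : Even #{n ∈ range N | d ∣ n} := by
  rcases N.eq_zero_or_pos with rfl | hNpos
  · simp
  obtain ⟨q, hq⟩ : d ∣ N - 1 := (Nat.modEq_iff_dvd' hNpos).mp hmod.symm
  obtain rfl : N = d * q + 1 := by omega
  rw [Nat.card_filter_dvd_range_mul_add_one hd.pos]
  have hq_odd : ¬ Even q := fun hq_even ↦ Nat.even_add_one.mp hN (hq_even.mul_left d)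
  exact Nat.even_add_one.mpr hq_odd

theorem Nat.pow_modEq_one_of_even (a : ℕ) {k : ℕ} (hk : Even k) : a ^ k ≡ 1 [MOD a + 1] := by
  rw [← ZMod.natCast_eq_natCast_iff, Nat.cast_pow, Nat.cast_one,
    eq_neg_of_add_eq_zero_left (ZMod.natCast_self' a), hk.neg_one_pow]

theorem S_even_value_general (m : ℕ) (k : ℕ) (hk : 0 < k) (hke : Even k) :
    Even (S m ((2 * m) ^ k)) := by
  rw [S, Finset.even_sum_ite_neg_one_pow_iff]
  have hN : Even ((2 * m) ^ k) := (Nat.even_pow' hk.ne').mpr (even_two_mul m)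
  exact Nat.even_card_filter_dvd_range (odd_two_mul_add_one m) hN (Nat.pow_modEq_one_of_even _ hke)

theorem S_even_value (m : ℕ) (hm : 0 < m) (k : ℕ) (hk : 0 < k) (hke : Even k) :
    Even (S m ((2 * m) ^ k)) :=
  S_even_value_general m k hk hke
end

section
/- For every positive integer m, Σ_{l=1}^{m} tan²(πl/(2m+1)) = m(2m+1). -/
/-!
Put `n = 2m + 1` and `z = exp (2πil/n)`, so that `tan² (πl/n) = -((z - 1)/(z + 1))²`.
Because `(-z)ⁿ = -1`, this square is a polynomial of degree `< n` in `z`: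
`-((z - 1)/(z + 1))² = -1 + ∑_{k<n} (n - 2k)(-z)ᵏ`.
Summing over all `n`-th roots of unity kills every power `zᵏ` with `0 < k < n`, hence
`∑_{l<n} tan² (πl/n) = -n + n·n = n(n - 1)`. The terms `l` and `n - l` agree and `l = 0`
contributes nothing, so the sum over `1 ≤ l ≤ m` is `n(n - 1)/2 = m(2m + 1)`.
-/

open Real Finset

theorem sq_one_sub_mul_sum_range_mul_pow {R : Type*} [CommRing R] (x : R) (n : ℕ) :
    (1 - x) ^ 2 * ∑ k ∈ range n, (k : R) * x ^ k = x - n * x ^ n + (n - 1) * x ^ (n + 1) := by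
  induction n with
  | zero => simp
  | succ n ih =>
    rw [sum_range_succ, mul_add, ih]
    push_cast
    ring

theorem sq_one_sub_mul_sum_range_sub_two_mul_pow {R : Type*} [CommRing R] {x : R} {n : ℕ}
    (hx : x ^ n = -1) :
    (1 - x) ^ 2 * ∑ k ∈ range n, ((n : R) - 2 * k) * x ^ k = -4 * x := by
  have hw := mul_neg_geom_sum x n
  have hv := sq_one_sub_mul_sum_range_mul_pow x n
  simp only [sub_mul, sum_sub_distrib, ← mul_sum, mul_assoc]
  linear_combination n * (1 - x) * hw - 2 * hv + (n - n * x + 2 * x) * hx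

theorem sub_one_div_add_one_sq_of_pow_eq_one {K : Type*} [Field K] [NeZero (2 : K)] {z : K}
    {n : ℕ} (hn : Odd n) (hz : z ^ n = 1) :
    ((z - 1) / (z + 1)) ^ 2 = 1 - ∑ k ∈ range n, ((n : K) - 2 * k) * (-z) ^ k := by
  have hz1 : z + 1 ≠ 0 := by
    intro h
    rw [eq_neg_of_add_eq_zero_left h, hn.neg_one_pow] at hz
    exact two_ne_zero (by linear_combination -hz : (2 : K) = 0)
  have key := sq_one_sub_mul_sum_range_sub_two_mul_pow (by rw [hn.neg_pow, hz] : (-z) ^ n = -1)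
  field_simp
  linear_combination key

theorem IsPrimitiveRoot.sum_range_pow_pow {R : Type*} [CommRing R] [IsDomain R] {ζ : R} {n : ℕ}
    (hζ : IsPrimitiveRoot ζ n) (k : ℕ) :
    ∑ l ∈ range n, (ζ ^ l) ^ k = if n ∣ k then (n : R) else 0 := by
  simp_rw [← pow_mul, mul_comm _ k, pow_mul]
  split_ifs with h
  · simp [(hζ.pow_eq_one_iff_dvd k).2 h]
  · have hne : ζ ^ k - 1 ≠ 0 := sub_ne_zero.2 fun he => h ((hζ.pow_eq_one_iff_dvd k).1 he)
    refine (mul_eq_zero.1 ?_).resolve_right hne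
    rw [geom_sum_mul, ← pow_mul, mul_comm, pow_mul, hζ.pow_eq_one, one_pow, sub_self]

theorem IsPrimitiveRoot.sum_range_sum_range_mul_pow {R : Type*} [CommRing R] [IsDomain R]
    {ζ : R} {n : ℕ} (hζ : IsPrimitiveRoot ζ n) (c : ℕ → R) :
    ∑ l ∈ range n, ∑ k ∈ range n, c k * (ζ ^ l) ^ k = n * c 0 := by
  rcases n.eq_zero_or_pos with rfl | hn
  · simp
  rw [sum_comm, sum_eq_single_of_mem 0 (mem_range.2 hn)]
  · simp [mul_comm]
  · intro k hk hk0
    rw [← mul_sum, hζ.sum_range_pow_pow,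
      if_neg fun hd => hk0 (Nat.eq_zero_of_dvd_of_lt hd (mem_range.1 hk)), mul_zero]

theorem Complex.tan_sq_eq_neg_exp_ratio_sq (z : ℂ) :
    tan z ^ 2 = -((exp (2 * I * z) - 1) / (exp (2 * I * z) + 1)) ^ 2 := by
  rw [tan_eq_sin_div_cos, ← inv_div, ← cot_eq_cos_div_sin, cot_eq_exp_ratio, inv_div, div_pow,
    div_pow, mul_pow, I_sq]
  ring

theorem Real.sum_range_tan_sq_pi_mul_div_of_odd {n : ℕ} (hn : Odd n) :
    ∑ l ∈ range n, tan (π * l / n) ^ 2 = n * (n - 1) := by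
  set ζ := Complex.exp (2 * π * Complex.I / n)
  have hζ : IsPrimitiveRoot ζ n := Complex.isPrimitiveRoot_exp n hn.pos.ne'
  have htan (l : ℕ) : (tan (π * l / n) ^ 2 : ℂ)
      = -1 + ∑ k ∈ range n, ((n : ℂ) - 2 * k) * (-1) ^ k * (ζ ^ l) ^ k := by
    have hexp : Complex.exp (2 * Complex.I * (π * l / n : ℝ)) = ζ ^ l := by
      rw [← Complex.exp_nat_mul]
      push_cast
      ring_nf
    rw [Complex.ofReal_tan, Complex.tan_sq_eq_neg_exp_ratio_sq, hexp,
      sub_one_div_add_one_sq_of_pow_eq_one hn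
        (by rw [← pow_mul, mul_comm, pow_mul, hζ.pow_eq_one, one_pow])]
    simp only [neg_pow (ζ ^ l), mul_assoc]
    ring
  have hsum := hζ.sum_range_sum_range_mul_pow fun k => ((n : ℂ) - 2 * k) * (-1) ^ k
  have hC : ∑ l ∈ range n, (tan (π * l / n) ^ 2 : ℂ) = n * (n - 1) := by
    rw [sum_congr rfl fun l _ => htan l, sum_add_distrib, hsum]
    simp only [sum_neg_distrib, sum_const, card_range, nsmul_eq_mul, mul_one, Nat.cast_zero,
      mul_zero, sub_zero, pow_zero]
    ring
  exact_mod_cast hC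

theorem Finset.sum_range_two_mul_add_one_eq_add_two_nsmul {M : Type*} [AddCommMonoid M]
    (f : ℕ → M) {m : ℕ} (hf : ∀ l ∈ Icc 1 m, f (2 * m + 1 - l) = f l) :
    ∑ l ∈ range (2 * m + 1), f l = f 0 + 2 • ∑ l ∈ Icc 1 m, f l := by
  have hIcc : ∑ l ∈ Icc 1 m, f l = ∑ l ∈ range m, f (l + 1) := by
    rw [← Ico_add_one_right_eq_Icc, sum_Ico_eq_sum_range]
    simp [add_comm]
  have hupper : ∑ l ∈ range m, f (m + l + 1) = ∑ l ∈ range m, f (l + 1) := by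
    conv_rhs => rw [← sum_range_reflect]
    refine sum_congr rfl fun l hl => ?_
    have hl := mem_range.1 hl
    rw [← hf (m - 1 - l + 1) (mem_Icc.2 ⟨by omega, by omega⟩)]
    congr 1
    omega
  rw [sum_range_succ', two_mul, sum_range_add, hupper, hIcc, two_nsmul, add_comm]

theorem tan_sq_sum_general (m : ℕ) :
    ∑ l ∈ Finset.Icc 1 m, (Real.tan (Real.pi * l / (2 * m + 1))) ^ 2 = m * (2 * m + 1) := by
  have hreflect : ∀ l ∈ Icc 1 m,
      tan (π * ↑(2 * m + 1 - l) / ↑(2 * m + 1)) ^ 2 = tan (π * l / ↑(2 * m + 1)) ^ 2 := by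
    intro l hl
    have hl : l ≤ 2 * m + 1 := (mem_Icc.1 hl).2.trans (by omega)
    rw [Nat.cast_sub hl, mul_sub, sub_div, mul_div_cancel_right₀ _ (by positivity), tan_pi_sub,
      neg_sq]
  have hsum := sum_range_tan_sq_pi_mul_div_of_odd (odd_two_mul_add_one m)
  rw [sum_range_two_mul_add_one_eq_add_two_nsmul _ hreflect] at hsum
  norm_num at hsum
  linear_combination hsum / 2

theorem tan_sq_sum (m : ℕ) (hm : 0 < m) :
    ∑ l ∈ Finset.Icc 1 m, (Real.tan (Real.pi * l / (2 * m + 1))) ^ 2 = m * (2 * m + 1) :=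
  tan_sq_sum_general m
end
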